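/- For any two policies π₁ and π₂ in an MDP with discount factor γ ∈ (0,1), the performance difference satisfies η(π₁) − η(π₂) = Σ_s ρ_{π₁}(s) (Q_{π₂}(s, π₁(s)) − V_{π₂}(s)), where ρ_{π₁}(s) = Σ_{t≥0} γ^t P(s_t = s | π₁) is the unnormalized discounted state visitation frequency of π₁, Q_{π₂} and V_{π₂} are the action-value and value functions of π₂, and η(π) = E_{τ∼π}[Σ_{t≥0} γ^t r(s_t,a_t)]. -/

import Mathlib

/-! Write `dₜ` for the state distribution of `π₁` at time `t` and `V` for `V_{π₂}`. The Bellman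
equation `Q_{π₂}(s, a) = r(s, a) + γ ∑ₛ' T(s, a, s') V(s')` gives
`γᵗ ⟨dₜ, Q_{π₂}(·, π₁ ·) - V⟩ = γᵗ ⟨dₜ, r_{π₁}⟩ + (γᵗ⁺¹ ⟨dₜ₊₁, V⟩ - γᵗ ⟨dₜ, V⟩)`.
Summed over `t`, the left side gives `∑ₛ ρ_{π₁}(s) (Q_{π₂}(s, π₁ s) - V(s))`, the first term on the
right gives `η(π₁)`, and the bracket telescopes to `-⟨d₀, V⟩`, which is `-η(π₂)` because `η` is
linear in the initial distribution. Every series converges absolutely since a stochastic kernel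
does not increase the `ℓ¹`-norm of `dₜ` and `|γ| < 1`. -/

/-- State distribution at time `t` under deterministic policy `π`,
transition kernel `T` and initial distribution `ρ0`. -/
def stateDist {S A : Type} [Fintype S] (T : S → A → S → ℝ) (ρ0 : S → ℝ)
    (π : S → A) : ℕ → S → ℝ
  | 0 => ρ0
  | t + 1 => fun s' => ∑ s : S, stateDist T ρ0 π t s * T s (π s) s'

/-- Unnormalized discounted state visitation frequency. -/
noncomputable def visitFreq {S A : Type} [Fintype S] (γ : ℝ) (T : S → A → S → ℝ)
    (ρ0 : S → ℝ) (π : S → A) (s : S) : ℝ :=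
  ∑' t : ℕ, γ ^ t * stateDist T ρ0 π t s

/-- Expected discounted return `η(π)` starting from `ρ0`. -/
noncomputable def perf {S A : Type} [Fintype S] (γ : ℝ) (T : S → A → S → ℝ)
    (ρ0 : S → ℝ) (r : S → A → ℝ) (π : S → A) : ℝ :=
  ∑' t : ℕ, γ ^ t * ∑ s : S, stateDist T ρ0 π t s * r s (π s)

/-- Value function `V_π(s)`: the return starting deterministically from `s`. -/
noncomputable def valueFn {S A : Type} [Fintype S] [DecidableEq S] (γ : ℝ)
    (T : S → A → S → ℝ) (r : S → A → ℝ) (π : S → A) (s : S) : ℝ :=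
  perf γ T (fun s' => if s' = s then 1 else 0) r π

/-- Action-value function `Q_π(s,a)`. -/
noncomputable def qFn {S A : Type} [Fintype S] [DecidableEq S] (γ : ℝ)
    (T : S → A → S → ℝ) (r : S → A → ℝ) (π : S → A) (s : S) (a : A) : ℝ :=
  r s a + γ * ∑ s' : S, T s a s' * valueFn γ T r π s'

open Finset Matrix

lemma HasSum.hasSum_succ_sub {α : Type*} [AddCommGroup α] [TopologicalSpace α]
    [IsTopologicalAddGroup α] {f : ℕ → α} {b : α} (hf : HasSum f b) :
    HasSum (fun n => f (n + 1) - f n) (-f 0) := by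
  simpa using ((hasSum_nat_add_iff' 1).2 hf).sub hf

section StateDistribution

variable {S A : Type} [Fintype S] (T : S → A → S → ℝ) (π : S → A)

lemma stateDist_succ_dotProduct (ρ0 w : S → ℝ) (t : ℕ) :
    stateDist T ρ0 π (t + 1) ⬝ᵥ w =
      ∑ s, stateDist T ρ0 π t s * ∑ s', T s (π s) s' * w s' := by
  simp only [dotProduct, stateDist, sum_mul, mul_sum, mul_assoc]
  exact sum_comm

lemma sum_abs_stateDist_le (hT : ∀ s a, (∀ s', 0 ≤ T s a s') ∧ ∑ s' : S, T s a s' = 1)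
    (ρ0 : S → ℝ) (t : ℕ) : ∑ s, |stateDist T ρ0 π t s| ≤ ∑ s, |ρ0 s| := by
  induction t with
  | zero => rfl
  | succ t ih =>
    calc ∑ s', |stateDist T ρ0 π (t + 1) s'|
        ≤ ∑ s', ∑ s, |stateDist T ρ0 π t s| * T s (π s) s' :=
          sum_le_sum fun s' _ => (abs_sum_le_sum_abs _ _).trans_eq <| sum_congr rfl fun s _ => by
            rw [abs_mul, abs_of_nonneg ((hT s (π s)).1 s')]
      _ = ∑ s, |stateDist T ρ0 π t s| := by
          rw [sum_comm]
          simp only [← mul_sum, (hT _ _).2, mul_one]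
      _ ≤ ∑ s, |ρ0 s| := ih

variable {γ : ℝ}

lemma summable_discounted_stateDist (hγ : |γ| < 1)
    (hT : ∀ s a, (∀ s', 0 ≤ T s a s') ∧ ∑ s' : S, T s a s' = 1) (ρ0 : S → ℝ) (s : S) :
    Summable fun t => γ ^ t * stateDist T ρ0 π t s := by
  refine .of_norm_bounded
    ((summable_geometric_of_lt_one (abs_nonneg γ) hγ).mul_right (∑ s, |ρ0 s|)) fun t => ?_
  rw [Real.norm_eq_abs, abs_mul, abs_pow]
  gcongr
  exact (single_le_sum (fun s _ => abs_nonneg _) (mem_univ s)).trans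
    (sum_abs_stateDist_le T π hT ρ0 t)

lemma hasSum_discounted_dotProduct (hγ : |γ| < 1)
    (hT : ∀ s a, (∀ s', 0 ≤ T s a s') ∧ ∑ s' : S, T s a s' = 1) (ρ0 w : S → ℝ) :
    HasSum (fun t => γ ^ t * (stateDist T ρ0 π t ⬝ᵥ w)) (visitFreq γ T ρ0 π ⬝ᵥ w) := by
  simp only [dotProduct, mul_sum, ← mul_assoc]
  exact hasSum_sum fun s _ => (summable_discounted_stateDist T π hγ hT ρ0 s).hasSum.mul_right (w s)

lemma perf_eq_visitFreq_dotProduct (hγ : |γ| < 1)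
    (hT : ∀ s a, (∀ s', 0 ≤ T s a s') ∧ ∑ s' : S, T s a s' = 1) (ρ0 : S → ℝ) (r : S → A → ℝ) :
    perf γ T ρ0 r π = visitFreq γ T ρ0 π ⬝ᵥ fun s => r s (π s) :=
  (hasSum_discounted_dotProduct T π hγ hT ρ0 _).tsum_eq

variable [DecidableEq S]

lemma stateDist_eq_sum_mul_stateDist_ite (ρ0 : S → ℝ) (t : ℕ) (s : S) :
    stateDist T ρ0 π t s =
      ∑ s0, ρ0 s0 * stateDist T (fun s' => if s' = s0 then 1 else 0) π t s := by
  induction t generalizing s with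
  | zero => simp [stateDist]
  | succ t ih =>
    simp only [stateDist, ih, sum_mul, mul_sum, mul_assoc]
    exact sum_comm

lemma perf_eq_dotProduct_valueFn (hγ : |γ| < 1)
    (hT : ∀ s a, (∀ s', 0 ≤ T s a s') ∧ ∑ s' : S, T s a s' = 1) (ρ0 : S → ℝ) (r : S → A → ℝ) :
    perf γ T ρ0 r π = ρ0 ⬝ᵥ valueFn γ T r π := by
  have hsplit : ∀ t, γ ^ t * (stateDist T ρ0 π t ⬝ᵥ fun s => r s (π s)) =
      ∑ s0, ρ0 s0 * (γ ^ t * (stateDist T (fun s' => if s' = s0 then 1 else 0) π t ⬝ᵥ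
        fun s => r s (π s))) := fun t => by
    simp only [dotProduct, stateDist_eq_sum_mul_stateDist_ite T π ρ0 t, sum_mul, mul_sum]
    rw [sum_comm]
    exact sum_congr rfl fun s0 _ => sum_congr rfl fun s _ => by ring
  change ∑' t, γ ^ t * (stateDist T ρ0 π t ⬝ᵥ fun s => r s (π s)) = _
  simp only [hsplit]
  exact (hasSum_sum fun s0 _ =>
    (hasSum_discounted_dotProduct T π hγ hT _ _).summable.hasSum.mul_left (ρ0 s0)).tsum_eq

lemma stateDist_dotProduct_qFn (π' : S → A) (ρ0 : S → ℝ) (r : S → A → ℝ) (t : ℕ) :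
    stateDist T ρ0 π t ⬝ᵥ (fun s => qFn γ T r π' s (π s)) =
      stateDist T ρ0 π t ⬝ᵥ (fun s => r s (π s)) +
        γ * (stateDist T ρ0 π (t + 1) ⬝ᵥ valueFn γ T r π') := by
  rw [stateDist_succ_dotProduct, mul_sum]
  simp only [qFn, dotProduct, mul_add, sum_add_distrib, mul_sum]
  congr 1
  exact sum_congr rfl fun s _ => sum_congr rfl fun s' _ => by ring

end StateDistribution

theorem perf_difference_general {S A : Type} [Fintype S] [DecidableEq S]
    (γ : ℝ) (hγ : 0 < γ ∧ γ < 1)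
    (T : S → A → S → ℝ) (hT : ∀ s a, (∀ s', 0 ≤ T s a s') ∧ ∑ s' : S, T s a s' = 1)
    (ρ0 : S → ℝ)
    (r : S → A → ℝ) (π₁ π₂ : S → A) :
    perf γ T ρ0 r π₁ - perf γ T ρ0 r π₂ =
      ∑ s : S, visitFreq γ T ρ0 π₁ s *
        (qFn γ T r π₂ s (π₁ s) - valueFn γ T r π₂ s) := by
  have hγ' : |γ| < 1 := abs_lt.2 ⟨by linarith [hγ.1], hγ.2⟩
  set V := valueFn γ T r π₂
  set f : ℕ → ℝ := fun t => γ ^ t * (stateDist T ρ0 π₁ t ⬝ᵥ V)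
  have hstep : ∀ t, γ ^ t * (stateDist T ρ0 π₁ t ⬝ᵥ fun s => qFn γ T r π₂ s (π₁ s) - V s) =
      γ ^ t * (stateDist T ρ0 π₁ t ⬝ᵥ fun s => r s (π₁ s)) + (f (t + 1) - f t) := fun t => by
    simp only [f, ← Pi.sub_def, dotProduct_sub, stateDist_dotProduct_qFn, pow_succ]
    ring
  have hsum := hasSum_discounted_dotProduct T π₁ hγ' hT ρ0 fun s => qFn γ T r π₂ s (π₁ s) - V s
  simp only [hstep] at hsum
  have hf0 : f 0 = perf γ T ρ0 r π₂ := by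
    simp only [f, pow_zero, one_mul, stateDist]
    exact (perf_eq_dotProduct_valueFn T π₂ hγ' hT ρ0 r).symm
  rw [perf_eq_visitFreq_dotProduct T π₁ hγ' hT, ← hf0, sub_eq_add_neg]
  exact ((hasSum_discounted_dotProduct T π₁ hγ' hT ρ0 _).add
    (hasSum_discounted_dotProduct T π₁ hγ' hT ρ0 V).hasSum_succ_sub).unique hsum

/-- Performance difference lemma: for any two deterministic policies `π₁, π₂`,
`η(π₁) − η(π₂) = Σ_s ρ_{π₁}(s) (Q_{π₂}(s, π₁(s)) − V_{π₂}(s))`. -/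
theorem perf_difference {S A : Type} [Fintype S] [DecidableEq S]
    (γ : ℝ) (hγ : 0 < γ ∧ γ < 1)
    (T : S → A → S → ℝ) (hT : ∀ s a, (∀ s', 0 ≤ T s a s') ∧ ∑ s' : S, T s a s' = 1)
    (ρ0 : S → ℝ) (hρ0 : (∀ s, 0 ≤ ρ0 s) ∧ ∑ s : S, ρ0 s = 1)
    (r : S → A → ℝ) (π₁ π₂ : S → A) :
    perf γ T ρ0 r π₁ - perf γ T ρ0 r π₂ =
      ∑ s : S, visitFreq γ T ρ0 π₁ s *
        (qFn γ T r π₂ s (π₁ s) - valueFn γ T r π₂ s) :=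
  perf_difference_general γ hγ T hT ρ0 r π₁ π₂
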